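/- For every nondeterministic finite automaton N with n states recognizing R ⊆ Σ* and a fresh letter $ ∉ Σ, there exists a semantically deterministic transition-based nondeterministic co-Büchi automaton A with exactly n states such that L(A) = ⋈_$(R), where ⋈_$(R) is the set of infinite words over Σ ∪ {$} that either contain finitely many $'s, or have a suffix in ($·R)^ω. -/
import Mathlib


open Filter

variable {A Q : Type}

/-- Extension of a transition function to sets of states and finite words. -/
def extSet (δ : Q → A → Set Q) : Set Q → List A → Set Q
  | S, [] => S
  | S, a :: u => extSet δ (⋃ q ∈ S, δ q a) u

/-- A nondeterministic automaton on finite words (NFW), with a total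
transition function. -/
structure NFW (A Q : Type) where
  init : Set Q
  δ : Q → A → Set Q
  F : Set Q
  init_nonempty : init.Nonempty
  δ_nonempty : ∀ q a, (δ q a).Nonempty

/-- The language of finite words recognized by an NFW. -/
def NFW.Lang (N : NFW A Q) : Set (List A) :=
  {u | ∃ q ∈ extSet N.δ N.init u, q ∈ N.F}

/-- A transition-based nondeterministic co-Büchi automaton (tNCW). -/
structure tNCW (A Q : Type) where
  init : Set Q
  δ : Q → A → Set Q
  α : Set (Q × A × Q)
  init_nonempty : init.Nonempty
  δ_nonempty : ∀ q a, (δ q a).Nonempty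

namespace tNCW

/-- `L(A^q)`: words having a run from `q` traversing `α`-transitions only
finitely often. -/
def LangFrom (M : tNCW A Q) (q : Q) : Set (ℕ → A) :=
  {w | ∃ r : ℕ → Q, r 0 = q ∧ (∀ i, r (i + 1) ∈ M.δ (r i) (w i)) ∧
    ∀ᶠ i in atTop, (r i, w i, r (i + 1)) ∉ M.α}

def Lang (M : tNCW A Q) : Set (ℕ → A) :=
  {w | ∃ q ∈ M.init, w ∈ M.LangFrom q}

/-- Semantic determinism. -/
def SD (M : tNCW A Q) : Prop :=
  (∀ q₁ ∈ M.init, ∀ q₂ ∈ M.init, M.LangFrom q₁ = M.LangFrom q₂) ∧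
  ∀ q a, ∀ q₁ ∈ M.δ q a, ∀ q₂ ∈ M.δ q a, M.LangFrom q₁ = M.LangFrom q₂

end tNCW

/-- `w` has a suffix in `($·R)^ω`: there is an infinite increasing sequence
`f` of `$`-positions (`$` is `none`) such that, between any two consecutive
ones, the letters spell a word of `R`. -/
def HasDollarRSuffix (R : Set (List A)) (w : ℕ → Option A) : Prop :=
  ∃ f : ℕ → ℕ, StrictMono f ∧ ∀ k, w (f k) = none ∧
    ∃ x ∈ R, (List.ofFn fun t : Fin (f (k + 1) - (f k + 1)) => w (f k + 1 + t)) = x.map some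

/-- `⋈_$(R)`: the words over `Σ ∪ {$}` that either contain finitely many
`$`'s or have a suffix in `($·R)^ω`. -/
def Bowtie (R : Set (List A)) : Set (ℕ → Option A) :=
  {w | (∀ N, ∃ i, N ≤ i ∧ w i = none) → HasDollarRSuffix R w}

lemma run_mem_extSet (δ : Q → A → Set Q) (S : Set Q) (u : List A) (r : ℕ → Q)
    (h0 : r 0 ∈ S) (hstep : ∀ i (h : i < u.length), r (i+1) ∈ δ (r i) (u.get ⟨i, h⟩)) :
    r u.length ∈ extSet δ S u := by
  induction u generalizing S r with
  | nil => exact h0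
  | cons a v ih =>
    have h1 : r 1 ∈ ⋃ q ∈ S, δ q a := Set.mem_biUnion h0 (hstep 0 (by simp))
    have := ih (⋃ q ∈ S, δ q a) (fun i => r (i+1)) h1 (fun i h => by
      have := hstep (i+1) (by simpa using Nat.succ_lt_succ h)
      simpa using this)
    simpa [extSet] using this

lemma extSet_run (δ : Q → A → Set Q) (S : Set Q) (u : List A) (p : Q)
    (hp : p ∈ extSet δ S u) :
    ∃ r : ℕ → Q, r 0 ∈ S ∧ r u.length = p ∧
      ∀ i (h : i < u.length), r (i+1) ∈ δ (r i) (u.get ⟨i, h⟩) := by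
  induction u generalizing S with
  | nil => exact ⟨fun _ => p, hp, rfl, fun i h => absurd h (by simp)⟩
  | cons a v ih =>
    obtain ⟨r', hr0, hrl, hrs⟩ := ih (⋃ q ∈ S, δ q a) (by simpa [extSet] using hp)
    obtain ⟨q0, hq0, hq0'⟩ := Set.mem_iUnion₂.mp hr0
    refine ⟨fun i => match i with | 0 => q0 | (j+1) => r' j, hq0, by simpa using hrl, ?_⟩
    intro i h
    match i with
    | 0 => simpa using hq0'
    | (j+1) =>
      have := hrs j (by simpa using Nat.lt_of_succ_lt_succ h)
      simpa using this

/-- The construction: same states as `N`; on a `Σ`-letter behave like `N`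
(non-`α`); on `$` go to the initial states of `N`, the transition being `α`
iff the source is non-accepting. -/
def mkM (N : NFW A Q) : tNCW (Option A) Q where
  init := N.init
  δ q a := match a with | none => N.init | some a => N.δ q a
  α := {p | p.2.1 = none ∧ p.1 ∉ N.F}
  init_nonempty := N.init_nonempty
  δ_nonempty q a := match a with | none => N.init_nonempty | some a => N.δ_nonempty q a

lemma mkM_δ_none (N : NFW A Q) (q : Q) : (mkM N).δ q none = N.init := rfl
lemma mkM_δ_some (N : NFW A Q) (q : Q) (a : A) : (mkM N).δ q (some a) = N.δ q a := rfl
lemma mkM_α (N : NFW A Q) (p : Q × Option A × Q) :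
    p ∈ (mkM N).α ↔ p.2.1 = none ∧ p.1 ∉ N.F := Iff.rfl

lemma mkM_langFrom (N : NFW A Q) (q : Q) :
    (mkM N).LangFrom q = Bowtie N.Lang := by
  classical
  ext w
  constructor
  · -- soundness
    rintro ⟨r, hr0, hstep, hev⟩ hinf
    obtain ⟨n0, hn0⟩ := eventually_atTop.mp hev
    have hF : ∀ i, n0 ≤ i → w i = none → r i ∈ N.F := by
      intro i hi hw
      by_contra h
      exact hn0 i hi ⟨hw, h⟩
    have hex : ∀ n : ℕ, ∃ i, n ≤ i ∧ w i = none := hinf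
    let f : ℕ → ℕ := fun k =>
      Nat.rec (Nat.find (hex n0)) (fun _ prev => Nat.find (hex (prev + 1))) k
    have hf0 : n0 ≤ f 0 ∧ w (f 0) = none := Nat.find_spec (hex n0)
    have hfs : ∀ k, f k + 1 ≤ f (k+1) ∧ w (f (k+1)) = none := fun k =>
      Nat.find_spec (hex (f k + 1))
    have hmin : ∀ k j, f k < j → j < f (k+1) → w j ≠ none := by
      intro k j h1 h2 hc
      exact Nat.find_min (hex (f k + 1)) h2 ⟨h1, hc⟩
    have hmono : StrictMono f := strictMono_nat_of_lt_succ fun k => (hfs k).1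
    have hn0f : ∀ k, n0 ≤ f k := fun k =>
      le_trans hf0.1 (hmono.monotone (Nat.zero_le k))
    have hwf : ∀ k, w (f k) = none := by
      intro k
      cases k with
      | zero => exact hf0.2
      | succ k => exact (hfs k).2
    refine ⟨f, hmono, fun k => ⟨hwf k, ?_⟩⟩
    -- the segment between f k and f (k+1) is in N.Lang
    set m := f (k+1) - (f k + 1) with hm
    have hsome : ∀ t : Fin m, (w (f k + 1 + t)).isSome := by
      intro t
      refine Option.ne_none_iff_isSome.mp (hmin k _ (by omega) ?_)
      have := t.2; omega
    set x : List A := List.ofFn (fun t : Fin m => (w (f k + 1 + t)).get (hsome t)) with hx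
    have hxlen : x.length = m := by simp [hx]
    have hseg : (List.ofFn fun t : Fin m => w (f k + 1 + t)) = x.map some := by
      rw [hx, List.map_ofFn]
      exact congrArg List.ofFn (funext fun t => (Option.some_get (hsome t)).symm)
    refine ⟨x, ?_, hseg⟩
    -- x ∈ N.Lang
    have hinit : r (f k + 1) ∈ N.init := by
      have := hstep (f k)
      rwa [hwf k, mkM_δ_none] at this
    have hrun := run_mem_extSet N.δ N.init x (fun i => r (f k + 1 + i)) hinit ?_
    · have heq : f k + 1 + x.length = f (k+1) := by
        rw [hxlen]; have := (hfs k).1; omega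
      have hrun2 : r (f k + 1 + x.length) ∈ extSet N.δ N.init x := hrun
      rw [heq] at hrun2
      exact ⟨r (f (k+1)), hrun2, hF _ (hn0f (k+1)) (hwf (k+1))⟩
    · intro i h
      have hi : i < m := by rwa [hxlen] at h
      have hwi : w (f k + 1 + i) = some (x.get ⟨i, h⟩) := by
        simp only [hx, List.get_eq_getElem, List.getElem_ofFn]
        exact (Option.some_get (hsome ⟨i, hi⟩)).symm
      have := hstep (f k + 1 + i)
      rwa [hwi, mkM_δ_some] at this
  · -- completeness
    intro hw
    by_cases hinf : ∀ n : ℕ, ∃ i, n ≤ i ∧ w i = none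
    · obtain ⟨f, hmono, hprop⟩ := hw hinf
      have hwf : ∀ k, w (f k) = none := fun k => (hprop k).1
      choose x hxR hxseg using fun k => (hprop k).2
      have hxlen : ∀ k, (x k).length = f (k+1) - (f k + 1) := by
        intro k
        have := congrArg List.length (hxseg k)
        simpa using this.symm
      have hruns : ∀ k, ∃ ρ : ℕ → Q, ρ 0 ∈ N.init ∧ ρ ((x k).length) ∈ N.F ∧
          ∀ i (h : i < (x k).length), ρ (i+1) ∈ N.δ (ρ i) ((x k).get ⟨i, h⟩) := by
        intro k
        obtain ⟨p, hp, hpF⟩ := hxR k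
        obtain ⟨ρ, h0, hl, hs⟩ := extSet_run N.δ N.init (x k) p hp
        exact ⟨ρ, h0, by rw [hl]; exact hpF, hs⟩
      choose ρ hρ0 hρF hρs using hruns
      have hwseg : ∀ k i (h : i < (x k).length),
          w (f k + 1 + i) = some ((x k).get ⟨i, h⟩) := by
        intro k i h
        have h2 : i < f (k+1) - (f k + 1) := (hxlen k) ▸ h
        have h3 := List.getElem_of_eq (hxseg k) (i := i) (by simpa using h2)
        simpa using h3
      -- position bookkeeping
      have hgex : ∀ i : ℕ, ∃ k, i ≤ f k := fun i => ⟨i, hmono.le_apply⟩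
      let g : ℕ → ℕ := fun i => Nat.find (hgex i)
      have hg : ∀ i, i ≤ f (g i) := fun i => Nat.find_spec (hgex i)
      have hg' : ∀ i k, k < g i → f k < i := fun i k hk =>
        lt_of_not_ge (Nat.find_min (hgex i) hk)
      have hgval : ∀ i k, f k < i → i ≤ f (k+1) → g i = k + 1 := by
        intro i k h1 h2
        have hle : g i ≤ k + 1 := Nat.find_min' (hgex i) h2
        have hgt : ¬ g i ≤ k := fun hk =>
          absurd (le_trans (hg i) (hmono.monotone hk)) (not_le.mpr h1)
        omega
      have hk_of : ∀ i, f 0 < i → ∃ k, f k < i ∧ i ≤ f (k+1) := by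
        intro i hi
        have h0 : g i ≠ 0 := fun h => absurd (h ▸ hg i) (not_le.mpr hi)
        refine ⟨g i - 1, hg' i _ (by omega), ?_⟩
        have h2 := hg i
        have h3 : g i - 1 + 1 = g i := by omega
        rwa [h3]
      -- the run
      let r0 : ℕ → Q := fun i =>
        Nat.rec q (fun j prev => ((mkM N).δ_nonempty prev (w j)).choose) i
      obtain ⟨r, hrdef⟩ : ∃ r : ℕ → Q, ∀ i,
          r i = if i ≤ f 0 then r0 i else ρ (g i - 1) (i - (f (g i - 1) + 1)) :=
        ⟨_, fun _ => rfl⟩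
      have hr_seg : ∀ i k, f k < i → i ≤ f (k+1) → r i = ρ k (i - (f k + 1)) := by
        intro i k h1 h2
        rw [hrdef,
          if_neg (not_le.mpr (lt_of_le_of_lt (hmono.monotone (Nat.zero_le k)) h1)),
          hgval i k h1 h2]
        simp
      refine ⟨r, ?_, ?_, ?_⟩
      · rw [hrdef, if_pos (Nat.zero_le _)]
        rfl
      · -- transitions
        intro i
        rcases lt_trichotomy i (f 0) with hlt | heq | hgt
        · rw [hrdef i, if_pos (le_of_lt hlt), hrdef (i+1), if_pos (show i + 1 ≤ f 0 from hlt)]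
          exact ((mkM N).δ_nonempty (r0 i) (w i)).choose_spec
        · have h1 : f 0 < i + 1 := by omega
          have h2 : i + 1 ≤ f 1 := Nat.succ_le_of_lt (heq ▸ hmono (Nat.zero_lt_one))
          rw [hrdef i, if_pos (le_of_eq heq), hr_seg (i+1) 0 h1 h2, heq, Nat.sub_self,
            hwf 0, mkM_δ_none]
          exact hρ0 0
        · obtain ⟨k, hk1, hk2⟩ := hk_of i hgt
          rcases eq_or_lt_of_le hk2 with heq2 | hlt2
          · -- i = f (k+1) : a reset
            have h1 : f (k+1) < i + 1 := by omega
            have h2 : i + 1 ≤ f (k+2) := by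
              have := hmono (show k + 1 < k + 2 by omega); omega
            rw [hr_seg (i+1) (k+1) h1 h2, ← heq2, Nat.sub_self, heq2, hwf (k+1),
              mkM_δ_none]
            exact hρ0 (k+1)
          · -- f k < i < f (k+1) : inside a segment
            have hj : i - (f k + 1) < (x k).length := by rw [hxlen k]; omega
            have h1 : f k < i + 1 := by omega
            have h2 : i + 1 ≤ f (k+1) := hlt2
            have hidx : i + 1 - (f k + 1) = (i - (f k + 1)) + 1 := by omega
            have hwi : w i = some ((x k).get ⟨i - (f k + 1), hj⟩) := by
              have := hwseg k (i - (f k + 1)) hj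
              have he : f k + 1 + (i - (f k + 1)) = i := by omega
              rwa [he] at this
            rw [hr_seg (i+1) k h1 h2, hr_seg i k hk1 hk2, hidx, hwi, mkM_δ_some]
            exact hρs k (i - (f k + 1)) hj
      · -- eventually no α-transitions
        refine eventually_atTop.mpr ⟨f 0 + 1, fun i hi hc => ?_⟩
        obtain ⟨hcw0, hcF0⟩ := (mkM_α N _).mp hc
        have hcw : w i = none := hcw0
        have hcF : r i ∉ N.F := hcF0
        obtain ⟨k, hk1, hk2⟩ := hk_of i (by omega)
        rcases eq_or_lt_of_le hk2 with heq2 | hlt2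
        · -- i = f (k+1) : state is accepting
          refine hcF ?_
          rw [hr_seg i k hk1 hk2]
          have h4 : i - (f k + 1) = (x k).length := by rw [hxlen k]; omega
          rw [h4]
          exact hρF k
        · -- inside a segment : letter is not $
          have hj : i - (f k + 1) < (x k).length := by rw [hxlen k]; omega
          have := hwseg k (i - (f k + 1)) hj
          have he : f k + 1 + (i - (f k + 1)) = i := by omega
          rw [he] at this
          rw [this] at hcw
          exact Option.some_ne_none _ hcw
    · -- finitely many $'s : any run works
      push_neg at hinf
      obtain ⟨n, hn⟩ := hinf
      let r : ℕ → Q := fun i =>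
        Nat.rec q (fun j prev => ((mkM N).δ_nonempty prev (w j)).choose) i
      refine ⟨r, rfl, fun i => ((mkM N).δ_nonempty (r i) (w i)).choose_spec, ?_⟩
      refine eventually_atTop.mpr ⟨n, fun i hi hc => ?_⟩
      exact hn i hi ((mkM_α N _).mp hc).1

/-- Every NFW `N` can be turned into a semantically deterministic tNCW, with
the same set of states, recognizing `⋈_$(L(N))`. -/
theorem nfw_to_sd_tncw [Fintype Q] (N : NFW A Q) :
    ∃ M : tNCW (Option A) Q, M.SD ∧ M.Lang = Bowtie N.Lang := by
  refine ⟨mkM N, ⟨fun q₁ _ q₂ _ => by rw [mkM_langFrom, mkM_langFrom],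
    fun q a q₁ _ q₂ _ => by rw [mkM_langFrom, mkM_langFrom]⟩, ?_⟩
  ext w
  simp only [tNCW.Lang, Set.mem_setOf_eq, mkM_langFrom]
  constructor
  · rintro ⟨p, _, h⟩; exact h
  · intro h; exact ⟨N.init_nonempty.choose, N.init_nonempty.choose_spec, h⟩
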